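/- Let H̃ = p₁² + p₂² + (a·q₁^(-2/3) + b)·q₂^(-2/3) on the region q₁ > 0, q₂ > 0, and let Z̃₆ = p₁²p₂²(p₁q₂ - p₂q₁)² - 2a[p₁p₂(p₁q₂ - p₂q₁)(p₁q₁ - p₂q₂)·q₁^(-2/3)q₂^(-2/3) - b·p₁(p₁q₁² + 4p₁q₂² - p₂q₁q₂)·q₁^(-2/3)q₂^(-4/3)] + a²[(p₁q₁ - p₂q₂)²·q₁^(-4/3)q₂^(-4/3) + 4b·q₁^(-4/3)] + 2b·p₁²(p₁q₂ - p₂q₁)(2p₁q₂ - p₂q₁)·q₂^(-2/3) + b²q₁²p₁²·q₂^(-4/3). Then {H̃, Z̃₆} = 0. -/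
import Mathlib


noncomputable def pb (F G : ℝ → ℝ → ℝ → ℝ → ℝ) (q1 q2 p1 p2 : ℝ) : ℝ :=
  deriv (fun x => F x q2 p1 p2) q1 * deriv (fun x => G q1 q2 x p2) p1
  + deriv (fun x => F q1 x p1 p2) q2 * deriv (fun x => G q1 q2 p1 x) p2
  - deriv (fun x => F q1 q2 x p2) p1 * deriv (fun x => G x q2 p1 p2) q1
  - deriv (fun x => F q1 q2 p1 x) p2 * deriv (fun x => G q1 x p1 p2) q2

noncomputable def Ht (a b : ℝ) (q1 q2 p1 p2 : ℝ) : ℝ :=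
  p1 ^ 2 + p2 ^ 2 + (a * q1 ^ (-(2 : ℝ) / 3) + b) * q2 ^ (-(2 : ℝ) / 3)

noncomputable def Z6 (a b : ℝ) (q1 q2 p1 p2 : ℝ) : ℝ :=
  p1 ^ 2 * p2 ^ 2 * (p1 * q2 - p2 * q1) ^ 2
  - 2 * a * (p1 * p2 * (p1 * q2 - p2 * q1) * (p1 * q1 - p2 * q2)
        * q1 ^ (-(2 : ℝ) / 3) * q2 ^ (-(2 : ℝ) / 3)
      - b * p1 * (p1 * q1 ^ 2 + 4 * p1 * q2 ^ 2 - p2 * q1 * q2)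
        * q1 ^ (-(2 : ℝ) / 3) * q2 ^ (-(4 : ℝ) / 3))
  + a ^ 2 * ((p1 * q1 - p2 * q2) ^ 2 * q1 ^ (-(4 : ℝ) / 3) * q2 ^ (-(4 : ℝ) / 3)
      + 4 * b * q1 ^ (-(4 : ℝ) / 3))
  + 2 * b * p1 ^ 2 * (p1 * q2 - p2 * q1) * (2 * p1 * q2 - p2 * q1) * q2 ^ (-(2 : ℝ) / 3)
  + b ^ 2 * q1 ^ 2 * p1 ^ 2 * q2 ^ (-(4 : ℝ) / 3)

private lemma hquad (c2 c1 c0 x : ℝ) :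
    HasDerivAt (fun y => c2 * y ^ 2 + c1 * y + c0) (2 * c2 * x + c1) x := by
  have h := (((hasDerivAt_pow 2 x).const_mul c2).add ((hasDerivAt_id x).const_mul c1)).add_const c0
  exact h.congr_deriv (by push_cast; ring)

private lemma hquart (c4 c3 c2 c1 c0 x : ℝ) :
    HasDerivAt (fun y => c4 * y ^ 4 + c3 * y ^ 3 + c2 * y ^ 2 + c1 * y + c0)
      (4 * c4 * x ^ 3 + 3 * c3 * x ^ 2 + 2 * c2 * x + c1) x := by
  have h := (((((hasDerivAt_pow 4 x).const_mul c4).add ((hasDerivAt_pow 3 x).const_mul c3)).add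
    ((hasDerivAt_pow 2 x).const_mul c2)).add ((hasDerivAt_id x).const_mul c1)).add_const c0
  exact h.congr_deriv (by push_cast; ring)

private lemma rpow_third (s : ℝ) (hs : 0 < s) (n : ℕ) : (s ^ 3) ^ (-(n : ℝ) / 3) = (s ^ n)⁻¹ := by
  rw [← Real.rpow_natCast s 3, ← Real.rpow_mul hs.le]
  push_cast
  rw [show (3 : ℝ) * (-(n : ℝ) / 3) = -(n : ℝ) by ring, Real.rpow_neg hs.le, Real.rpow_natCast]

set_option maxHeartbeats 2000000 in
theorem stmt6 (a b : ℝ) (q1 q2 p1 p2 : ℝ) (hq1 : 0 < q1) (hq2 : 0 < q2) :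
    pb (Ht a b) (Z6 a b) q1 q2 p1 p2 = 0 := by
  obtain ⟨s, hs, hs3⟩ : ∃ s : ℝ, 0 < s ∧ s ^ 3 = q1 :=
    ⟨q1 ^ ((1:ℝ)/3), Real.rpow_pos_of_pos hq1 _, by
      rw [← Real.rpow_natCast (q1 ^ ((1:ℝ)/3)) 3, ← Real.rpow_mul hq1.le]; norm_num⟩
  obtain ⟨t, htp, ht3⟩ : ∃ t : ℝ, 0 < t ∧ t ^ 3 = q2 :=
    ⟨q2 ^ ((1:ℝ)/3), Real.rpow_pos_of_pos hq2 _, by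
      rw [← Real.rpow_natCast (q2 ^ ((1:ℝ)/3)) 3, ← Real.rpow_mul hq2.le]; norm_num⟩
  have hHq1 : HasDerivAt (fun x => Ht a b x q2 p1 p2) (((2 * ((0:ℝ)) * q1 + ((0:ℝ))) + (((2 * ((0:ℝ)) * q1 + ((0:ℝ))) * q1 ^ (-(2:ℝ)/3) + (((0:ℝ)) * q1 ^ 2 + ((0:ℝ)) * q1 + ((1:ℝ) * a * q2 ^ (-(2:ℝ)/3))) * (-(2:ℝ)/3 * q1 ^ (-(2:ℝ)/3 - 1)))) + (((2 * ((0:ℝ)) * q1 + ((0:ℝ))) * q1 ^ (-(4:ℝ)/3) + (((0:ℝ)) * q1 ^ 2 + ((0:ℝ)) * q1 + ((0:ℝ))) * (-(4:ℝ)/3 * q1 ^ (-(4:ℝ)/3 - 1)))))) q1 := by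
    have e : (fun x => Ht a b x q2 p1 p2) = (fun x : ℝ => (((0:ℝ)) * x ^ 2 + ((0:ℝ)) * x + ((1:ℝ) * p2 ^ 2 + (1:ℝ) * p1 ^ 2 + (1:ℝ) * b * q2 ^ (-(2:ℝ)/3))) + (((0:ℝ)) * x ^ 2 + ((0:ℝ)) * x + ((1:ℝ) * a * q2 ^ (-(2:ℝ)/3))) * x ^ (-(2:ℝ)/3) + (((0:ℝ)) * x ^ 2 + ((0:ℝ)) * x + ((0:ℝ))) * x ^ (-(4:ℝ)/3)) := by
      funext x; simp only [Ht]; ring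
    rw [e]
    exact (((hquad _ _ _ q1).add ((hquad _ _ _ q1).mul (Real.hasDerivAt_rpow_const (p := -(2:ℝ)/3) (x := q1) (Or.inl hq1.ne')))).add ((hquad _ _ _ q1).mul (Real.hasDerivAt_rpow_const (p := -(4:ℝ)/3) (x := q1) (Or.inl hq1.ne'))))
  have hHq2 : HasDerivAt (fun x => Ht a b q1 x p1 p2) (((2 * ((0:ℝ)) * q2 + ((0:ℝ))) + (((2 * ((0:ℝ)) * q2 + ((0:ℝ))) * q2 ^ (-(2:ℝ)/3) + (((0:ℝ)) * q2 ^ 2 + ((0:ℝ)) * q2 + ((1:ℝ) * b + (1:ℝ) * a * q1 ^ (-(2:ℝ)/3))) * (-(2:ℝ)/3 * q2 ^ (-(2:ℝ)/3 - 1)))) + (((2 * ((0:ℝ)) * q2 + ((0:ℝ))) * q2 ^ (-(4:ℝ)/3) + (((0:ℝ)) * q2 ^ 2 + ((0:ℝ)) * q2 + ((0:ℝ))) * (-(4:ℝ)/3 * q2 ^ (-(4:ℝ)/3 - 1)))))) q2 := by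
    have e : (fun x => Ht a b q1 x p1 p2) = (fun x : ℝ => (((0:ℝ)) * x ^ 2 + ((0:ℝ)) * x + ((1:ℝ) * p2 ^ 2 + (1:ℝ) * p1 ^ 2)) + (((0:ℝ)) * x ^ 2 + ((0:ℝ)) * x + ((1:ℝ) * b + (1:ℝ) * a * q1 ^ (-(2:ℝ)/3))) * x ^ (-(2:ℝ)/3) + (((0:ℝ)) * x ^ 2 + ((0:ℝ)) * x + ((0:ℝ))) * x ^ (-(4:ℝ)/3)) := by
      funext x; simp only [Ht]; ring
    rw [e]
    exact (((hquad _ _ _ q2).add ((hquad _ _ _ q2).mul (Real.hasDerivAt_rpow_const (p := -(2:ℝ)/3) (x := q2) (Or.inl hq2.ne')))).add ((hquad _ _ _ q2).mul (Real.hasDerivAt_rpow_const (p := -(4:ℝ)/3) (x := q2) (Or.inl hq2.ne'))))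
  have hHp1 : HasDerivAt (fun x => Ht a b q1 q2 x p2) ((4 * ((0:ℝ)) * p1 ^ 3 + 3 * ((0:ℝ)) * p1 ^ 2 + 2 * ((1:ℝ)) * p1 + ((0:ℝ)))) p1 := by
    have e : (fun x => Ht a b q1 q2 x p2) = (fun x : ℝ => ((0:ℝ)) * x ^ 4 + ((0:ℝ)) * x ^ 3 + ((1:ℝ)) * x ^ 2 + ((0:ℝ)) * x + ((1:ℝ) * p2 ^ 2 + (1:ℝ) * b * q2 ^ (-(2:ℝ)/3) + (1:ℝ) * a * q1 ^ (-(2:ℝ)/3) * q2 ^ (-(2:ℝ)/3))) := by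
      funext x; simp only [Ht]; ring
    rw [e]
    exact hquart _ _ _ _ _ p1
  have hHp2 : HasDerivAt (fun x => Ht a b q1 q2 p1 x) ((4 * ((0:ℝ)) * p2 ^ 3 + 3 * ((0:ℝ)) * p2 ^ 2 + 2 * ((1:ℝ)) * p2 + ((0:ℝ)))) p2 := by
    have e : (fun x => Ht a b q1 q2 p1 x) = (fun x : ℝ => ((0:ℝ)) * x ^ 4 + ((0:ℝ)) * x ^ 3 + ((1:ℝ)) * x ^ 2 + ((0:ℝ)) * x + ((1:ℝ) * p1 ^ 2 + (1:ℝ) * b * q2 ^ (-(2:ℝ)/3) + (1:ℝ) * a * q1 ^ (-(2:ℝ)/3) * q2 ^ (-(2:ℝ)/3))) := by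
      funext x; simp only [Ht]; ring
    rw [e]
    exact hquart _ _ _ _ _ p2
  have hZq1 : HasDerivAt (fun x => Z6 a b x q2 p1 p2) (((2 * ((1:ℝ) * p1 ^ 2 * p2 ^ 4 + (2:ℝ) * b * p1 ^ 2 * p2 ^ 2 * q2 ^ (-(2:ℝ)/3) + (1:ℝ) * b ^ 2 * p1 ^ 2 * q2 ^ (-(4:ℝ)/3)) * q1 + ((-2:ℝ) * p1 ^ 3 * p2 ^ 3 * q2 + (-6:ℝ) * b * p1 ^ 3 * p2 * q2 * q2 ^ (-(2:ℝ)/3))) + (((2 * ((2:ℝ) * a * p1 ^ 2 * p2 ^ 2 * q2 ^ (-(2:ℝ)/3) + (2:ℝ) * a * b * p1 ^ 2 * q2 ^ (-(4:ℝ)/3)) * q1 + ((-2:ℝ) * a * p1 * p2 ^ 3 * q2 * q2 ^ (-(2:ℝ)/3) + (-2:ℝ) * a * p1 ^ 3 * p2 * q2 * q2 ^ (-(2:ℝ)/3) + (-2:ℝ) * a * b * p1 * p2 * q2 * q2 ^ (-(4:ℝ)/3))) * q1 ^ (-(2:ℝ)/3) + (((2:ℝ) * a * p1 ^ 2 * p2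 ^ 2 * q2 ^ (-(2:ℝ)/3) + (2:ℝ) * a * b * p1 ^ 2 * q2 ^ (-(4:ℝ)/3)) * q1 ^ 2 + ((-2:ℝ) * a * p1 * p2 ^ 3 * q2 * q2 ^ (-(2:ℝ)/3) + (-2:ℝ) * a * p1 ^ 3 * p2 * q2 * q2 ^ (-(2:ℝ)/3) + (-2:ℝ) * a * b * p1 * p2 * q2 * q2 ^ (-(4:ℝ)/3)) * q1 + ((2:ℝ) * a * p1 ^ 2 * p2 ^ 2 * q2 ^ 2 * q2 ^ (-(2:ℝ)/3) + (8:ℝ) * a * b * p1 ^ 2 * q2 ^ 2 * q2 ^ (-(4:ℝ)/3))) * (-(2:ℝ)/3 * q1 ^ (-(2:ℝ)/3 - 1)))) + (((2 * ((1:ℝ) * a ^ 2 * p1 ^ 2 * q2 ^ (-(4:ℝ)/3)) * q1 + ((-2:ℝ) * a ^ 2 * p1 * p2 * q2 * q2 ^ (-(4:ℝ)/3))) * q1 ^ (-(4:ℝ)/3) + (((1:ℝ) * a ^ 2 * p1 ^ 2 * q2 ^ (-(4:ℝ)/3)) * q1 ^ 2 + ((-2:ℝ) * a ^ 2 * p1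 * p2 * q2 * q2 ^ (-(4:ℝ)/3)) * q1 + ((1:ℝ) * a ^ 2 * p2 ^ 2 * q2 ^ 2 * q2 ^ (-(4:ℝ)/3) + (4:ℝ) * a ^ 2 * b)) * (-(4:ℝ)/3 * q1 ^ (-(4:ℝ)/3 - 1)))))) q1 := by
    have e : (fun x => Z6 a b x q2 p1 p2) = (fun x : ℝ => (((1:ℝ) * p1 ^ 2 * p2 ^ 4 + (2:ℝ) * b * p1 ^ 2 * p2 ^ 2 * q2 ^ (-(2:ℝ)/3) + (1:ℝ) * b ^ 2 * p1 ^ 2 * q2 ^ (-(4:ℝ)/3)) * x ^ 2 + ((-2:ℝ) * p1 ^ 3 * p2 ^ 3 * q2 + (-6:ℝ) * b * p1 ^ 3 * p2 * q2 * q2 ^ (-(2:ℝ)/3)) * x + ((1:ℝ) * p1 ^ 4 * p2 ^ 2 * q2 ^ 2 + (4:ℝ) * b * p1 ^ 4 * q2 ^ 2 * q2 ^ (-(2:ℝ)/3))) + (((2:ℝ) * a * p1 ^ 2 * p2 ^ 2 * q2 ^ (-(2:ℝ)/3) + (2:ℝ) * a * b * p1 ^ 2 * q2 ^ (-(4:ℝ)/3))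 * x ^ 2 + ((-2:ℝ) * a * p1 * p2 ^ 3 * q2 * q2 ^ (-(2:ℝ)/3) + (-2:ℝ) * a * p1 ^ 3 * p2 * q2 * q2 ^ (-(2:ℝ)/3) + (-2:ℝ) * a * b * p1 * p2 * q2 * q2 ^ (-(4:ℝ)/3)) * x + ((2:ℝ) * a * p1 ^ 2 * p2 ^ 2 * q2 ^ 2 * q2 ^ (-(2:ℝ)/3) + (8:ℝ) * a * b * p1 ^ 2 * q2 ^ 2 * q2 ^ (-(4:ℝ)/3))) * x ^ (-(2:ℝ)/3) + (((1:ℝ) * a ^ 2 * p1 ^ 2 * q2 ^ (-(4:ℝ)/3)) * x ^ 2 + ((-2:ℝ) * a ^ 2 * p1 * p2 * q2 * q2 ^ (-(4:ℝ)/3)) * x + ((1:ℝ) * a ^ 2 * p2 ^ 2 * q2 ^ 2 * q2 ^ (-(4:ℝ)/3) + (4:ℝ) * a ^ 2 * b)) * x ^ (-(4:ℝ)/3)) := by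
      funext x; simp only [Z6]; ring
    rw [e]
    exact (((hquad _ _ _ q1).add ((hquad _ _ _ q1).mul (Real.hasDerivAt_rpow_const (p := -(2:ℝ)/3) (x := q1) (Or.inl hq1.ne')))).add ((hquad _ _ _ q1).mul (Real.hasDerivAt_rpow_const (p := -(4:ℝ)/3) (x := q1) (Or.inl hq1.ne'))))
  have hZq2 : HasDerivAt (fun x => Z6 a b q1 x p1 p2) (((2 * ((1:ℝ) * p1 ^ 4 * p2 ^ 2) * q2 + ((-2:ℝ) * p1 ^ 3 * p2 ^ 3 * q1)) + (((2 * ((4:ℝ) * b * p1 ^ 4 + (2:ℝ) * a * p1 ^ 2 * p2 ^ 2 * q1 ^ (-(2:ℝ)/3)) * q2 + ((-6:ℝ) * b * p1 ^ 3 * p2 * q1 + (-2:ℝ) * a * p1 * p2 ^ 3 * q1 * q1 ^ (-(2:ℝ)/3) + (-2:ℝ) * a * p1 ^ 3 * p2 * q1 * q1 ^ (-(2:ℝ)/3))) * q2 ^ (-(2:ℝ)/3) + (((4:ℝ) * b * p1 ^ 4 + (2:ℝ) * a * p1 ^ 2 * p2 ^ 2 * q1 ^ (-(2:ℝ)/3))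 * q2 ^ 2 + ((-6:ℝ) * b * p1 ^ 3 * p2 * q1 + (-2:ℝ) * a * p1 * p2 ^ 3 * q1 * q1 ^ (-(2:ℝ)/3) + (-2:ℝ) * a * p1 ^ 3 * p2 * q1 * q1 ^ (-(2:ℝ)/3)) * q2 + ((2:ℝ) * b * p1 ^ 2 * p2 ^ 2 * q1 ^ 2 + (2:ℝ) * a * p1 ^ 2 * p2 ^ 2 * q1 ^ 2 * q1 ^ (-(2:ℝ)/3))) * (-(2:ℝ)/3 * q2 ^ (-(2:ℝ)/3 - 1)))) + (((2 * ((8:ℝ) * a * b * p1 ^ 2 * q1 ^ (-(2:ℝ)/3) + (1:ℝ) * a ^ 2 * p2 ^ 2 * q1 ^ (-(4:ℝ)/3)) * q2 + ((-2:ℝ) * a * b * p1 * p2 * q1 * q1 ^ (-(2:ℝ)/3) + (-2:ℝ) * a ^ 2 * p1 * p2 * q1 * q1 ^ (-(4:ℝ)/3))) * q2 ^ (-(4:ℝ)/3) + (((8:ℝ) * a * b * p1 ^ 2 * q1 ^ (-(2:ℝ)/3) + (1:ℝ) * a ^ 2 * p2 ^ 2 * q1 ^ (-(4:ℝ)/3))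 * q2 ^ 2 + ((-2:ℝ) * a * b * p1 * p2 * q1 * q1 ^ (-(2:ℝ)/3) + (-2:ℝ) * a ^ 2 * p1 * p2 * q1 * q1 ^ (-(4:ℝ)/3)) * q2 + ((1:ℝ) * b ^ 2 * p1 ^ 2 * q1 ^ 2 + (2:ℝ) * a * b * p1 ^ 2 * q1 ^ 2 * q1 ^ (-(2:ℝ)/3) + (1:ℝ) * a ^ 2 * p1 ^ 2 * q1 ^ 2 * q1 ^ (-(4:ℝ)/3))) * (-(4:ℝ)/3 * q2 ^ (-(4:ℝ)/3 - 1)))))) q2 := by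
    have e : (fun x => Z6 a b q1 x p1 p2) = (fun x : ℝ => (((1:ℝ) * p1 ^ 4 * p2 ^ 2) * x ^ 2 + ((-2:ℝ) * p1 ^ 3 * p2 ^ 3 * q1) * x + ((1:ℝ) * p1 ^ 2 * p2 ^ 4 * q1 ^ 2 + (4:ℝ) * a ^ 2 * b * q1 ^ (-(4:ℝ)/3))) + (((4:ℝ) * b * p1 ^ 4 + (2:ℝ) * a * p1 ^ 2 * p2 ^ 2 * q1 ^ (-(2:ℝ)/3)) * x ^ 2 + ((-6:ℝ) * b * p1 ^ 3 * p2 * q1 + (-2:ℝ) * a * p1 * p2 ^ 3 * q1 * q1 ^ (-(2:ℝ)/3) + (-2:ℝ) * a * p1 ^ 3 * p2 * q1 * q1 ^ (-(2:ℝ)/3)) * x + ((2:ℝ) * b * p1 ^ 2 * p2 ^ 2 * q1 ^ 2 + (2:ℝ) * a * p1 ^ 2 * p2 ^ 2 * q1 ^ 2 * q1 ^ (-(2:ℝ)/3))) * x ^ (-(2:ℝ)/3) + (((8:ℝ) * a * b * p1 ^ 2 * q1 ^ (-(2:ℝ)/3) + (1:ℝ) * a ^ 2 * p2 ^ 2 *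 q1 ^ (-(4:ℝ)/3)) * x ^ 2 + ((-2:ℝ) * a * b * p1 * p2 * q1 * q1 ^ (-(2:ℝ)/3) + (-2:ℝ) * a ^ 2 * p1 * p2 * q1 * q1 ^ (-(4:ℝ)/3)) * x + ((1:ℝ) * b ^ 2 * p1 ^ 2 * q1 ^ 2 + (2:ℝ) * a * b * p1 ^ 2 * q1 ^ 2 * q1 ^ (-(2:ℝ)/3) + (1:ℝ) * a ^ 2 * p1 ^ 2 * q1 ^ 2 * q1 ^ (-(4:ℝ)/3))) * x ^ (-(4:ℝ)/3)) := by
      funext x; simp only [Z6]; ring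
    rw [e]
    exact (((hquad _ _ _ q2).add ((hquad _ _ _ q2).mul (Real.hasDerivAt_rpow_const (p := -(2:ℝ)/3) (x := q2) (Or.inl hq2.ne')))).add ((hquad _ _ _ q2).mul (Real.hasDerivAt_rpow_const (p := -(4:ℝ)/3) (x := q2) (Or.inl hq2.ne'))))
  have hZp1 : HasDerivAt (fun x => Z6 a b q1 q2 x p2) ((4 * ((1:ℝ) * p2 ^ 2 * q2 ^ 2 + (4:ℝ) * b * q2 ^ 2 * q2 ^ (-(2:ℝ)/3)) * p1 ^ 3 + 3 * ((-2:ℝ) * p2 ^ 3 * q1 * q2 + (-6:ℝ) * b * p2 * q1 * q2 * q2 ^ (-(2:ℝ)/3) + (-2:ℝ) * a * p2 * q1 * q1 ^ (-(2:ℝ)/3) * q2 * q2 ^ (-(2:ℝ)/3)) * p1 ^ 2 + 2 * ((1:ℝ) * p2 ^ 4 * q1 ^ 2 + (2:ℝ) * b * p2 ^ 2 * q1 ^ 2 * q2 ^ (-(2:ℝ)/3) + (1:ℝ) * b ^ 2 * q1 ^ 2 * q2 ^ (-(4:ℝ)/3) + (2:ℝ) * a * p2 ^ 2 * q1 ^ (-(2:ℝ)/3)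 * q2 ^ 2 * q2 ^ (-(2:ℝ)/3) + (2:ℝ) * a * p2 ^ 2 * q1 ^ 2 * q1 ^ (-(2:ℝ)/3) * q2 ^ (-(2:ℝ)/3) + (8:ℝ) * a * b * q1 ^ (-(2:ℝ)/3) * q2 ^ 2 * q2 ^ (-(4:ℝ)/3) + (2:ℝ) * a * b * q1 ^ 2 * q1 ^ (-(2:ℝ)/3) * q2 ^ (-(4:ℝ)/3) + (1:ℝ) * a ^ 2 * q1 ^ 2 * q1 ^ (-(4:ℝ)/3) * q2 ^ (-(4:ℝ)/3)) * p1 + ((-2:ℝ) * a * p2 ^ 3 * q1 * q1 ^ (-(2:ℝ)/3) * q2 * q2 ^ (-(2:ℝ)/3) + (-2:ℝ) * a * b * p2 * q1 * q1 ^ (-(2:ℝ)/3) * q2 * q2 ^ (-(4:ℝ)/3) + (-2:ℝ) * a ^ 2 * p2 * q1 * q1 ^ (-(4:ℝ)/3) * q2 * q2 ^ (-(4:ℝ)/3)))) p1 := by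
    have e : (fun x => Z6 a b q1 q2 x p2) = (fun x : ℝ => ((1:ℝ) * p2 ^ 2 * q2 ^ 2 + (4:ℝ) * b * q2 ^ 2 * q2 ^ (-(2:ℝ)/3)) * x ^ 4 + ((-2:ℝ) * p2 ^ 3 * q1 * q2 + (-6:ℝ) * b * p2 * q1 * q2 * q2 ^ (-(2:ℝ)/3) + (-2:ℝ) * a * p2 * q1 * q1 ^ (-(2:ℝ)/3) * q2 * q2 ^ (-(2:ℝ)/3)) * x ^ 3 + ((1:ℝ) * p2 ^ 4 * q1 ^ 2 + (2:ℝ) * b * p2 ^ 2 * q1 ^ 2 * q2 ^ (-(2:ℝ)/3) + (1:ℝ) * b ^ 2 * q1 ^ 2 * q2 ^ (-(4:ℝ)/3) + (2:ℝ) * a * p2 ^ 2 * q1 ^ (-(2:ℝ)/3) * q2 ^ 2 * q2 ^ (-(2:ℝ)/3) + (2:ℝ) * a * p2 ^ 2 * q1 ^ 2 * q1 ^ (-(2:ℝ)/3) * q2 ^ (-(2:ℝ)/3) + (8:ℝ) * a * b * q1 ^ (-(2:ℝ)/3) * q2 ^ 2 * q2 ^ (-(4:ℝ)/3) + (2:ℝ)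 * a * b * q1 ^ 2 * q1 ^ (-(2:ℝ)/3) * q2 ^ (-(4:ℝ)/3) + (1:ℝ) * a ^ 2 * q1 ^ 2 * q1 ^ (-(4:ℝ)/3) * q2 ^ (-(4:ℝ)/3)) * x ^ 2 + ((-2:ℝ) * a * p2 ^ 3 * q1 * q1 ^ (-(2:ℝ)/3) * q2 * q2 ^ (-(2:ℝ)/3) + (-2:ℝ) * a * b * p2 * q1 * q1 ^ (-(2:ℝ)/3) * q2 * q2 ^ (-(4:ℝ)/3) + (-2:ℝ) * a ^ 2 * p2 * q1 * q1 ^ (-(4:ℝ)/3) * q2 * q2 ^ (-(4:ℝ)/3)) * x + ((1:ℝ) * a ^ 2 * p2 ^ 2 * q1 ^ (-(4:ℝ)/3) * q2 ^ 2 * q2 ^ (-(4:ℝ)/3) + (4:ℝ) * a ^ 2 * b * q1 ^ (-(4:ℝ)/3))) := by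
      funext x; simp only [Z6]; ring
    rw [e]
    exact hquart _ _ _ _ _ p1
  have hZp2 : HasDerivAt (fun x => Z6 a b q1 q2 p1 x) ((4 * ((1:ℝ) * p1 ^ 2 * q1 ^ 2) * p2 ^ 3 + 3 * ((-2:ℝ) * p1 ^ 3 * q1 * q2 + (-2:ℝ) * a * p1 * q1 * q1 ^ (-(2:ℝ)/3) * q2 * q2 ^ (-(2:ℝ)/3)) * p2 ^ 2 + 2 * ((1:ℝ) * p1 ^ 4 * q2 ^ 2 + (2:ℝ) * b * p1 ^ 2 * q1 ^ 2 * q2 ^ (-(2:ℝ)/3) + (2:ℝ) * a * p1 ^ 2 * q1 ^ (-(2:ℝ)/3) * q2 ^ 2 * q2 ^ (-(2:ℝ)/3) + (2:ℝ) * a * p1 ^ 2 * q1 ^ 2 * q1 ^ (-(2:ℝ)/3) * q2 ^ (-(2:ℝ)/3) + (1:ℝ) * a ^ 2 * q1 ^ (-(4:ℝ)/3) * q2 ^ 2 * q2 ^ (-(4:ℝ)/3)) * p2 + ((-6:ℝ) * b * p1 ^ 3 * q1 * q2 * q2 ^ (-(2:ℝ)/3) + (-2:ℝ) * a * p1 ^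 3 * q1 * q1 ^ (-(2:ℝ)/3) * q2 * q2 ^ (-(2:ℝ)/3) + (-2:ℝ) * a * b * p1 * q1 * q1 ^ (-(2:ℝ)/3) * q2 * q2 ^ (-(4:ℝ)/3) + (-2:ℝ) * a ^ 2 * p1 * q1 * q1 ^ (-(4:ℝ)/3) * q2 * q2 ^ (-(4:ℝ)/3)))) p2 := by
    have e : (fun x => Z6 a b q1 q2 p1 x) = (fun x : ℝ => ((1:ℝ) * p1 ^ 2 * q1 ^ 2) * x ^ 4 + ((-2:ℝ) * p1 ^ 3 * q1 * q2 + (-2:ℝ) * a * p1 * q1 * q1 ^ (-(2:ℝ)/3) * q2 * q2 ^ (-(2:ℝ)/3)) * x ^ 3 + ((1:ℝ) * p1 ^ 4 * q2 ^ 2 + (2:ℝ) * b * p1 ^ 2 * q1 ^ 2 * q2 ^ (-(2:ℝ)/3) + (2:ℝ) * a * p1 ^ 2 * q1 ^ (-(2:ℝ)/3) * q2 ^ 2 * q2 ^ (-(2:ℝ)/3) + (2:ℝ) * a * p1 ^ 2 * q1 ^ 2 * q1 ^ (-(2:ℝ)/3) * q2 ^ (-(2:ℝ)/3) + (1:ℝ)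 * a ^ 2 * q1 ^ (-(4:ℝ)/3) * q2 ^ 2 * q2 ^ (-(4:ℝ)/3)) * x ^ 2 + ((-6:ℝ) * b * p1 ^ 3 * q1 * q2 * q2 ^ (-(2:ℝ)/3) + (-2:ℝ) * a * p1 ^ 3 * q1 * q1 ^ (-(2:ℝ)/3) * q2 * q2 ^ (-(2:ℝ)/3) + (-2:ℝ) * a * b * p1 * q1 * q1 ^ (-(2:ℝ)/3) * q2 * q2 ^ (-(4:ℝ)/3) + (-2:ℝ) * a ^ 2 * p1 * q1 * q1 ^ (-(4:ℝ)/3) * q2 * q2 ^ (-(4:ℝ)/3)) * x + ((4:ℝ) * b * p1 ^ 4 * q2 ^ 2 * q2 ^ (-(2:ℝ)/3) + (1:ℝ) * b ^ 2 * p1 ^ 2 * q1 ^ 2 * q2 ^ (-(4:ℝ)/3) + (8:ℝ) * a * b * p1 ^ 2 * q1 ^ (-(2:ℝ)/3) * q2 ^ 2 * q2 ^ (-(4:ℝ)/3) + (2:ℝ) * a * b * p1 ^ 2 * q1 ^ 2 * q1 ^ (-(2:ℝ)/3) * q2 ^ (-(4:ℝ)/3) + (1:ℝ) * a ^ 2 *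 p1 ^ 2 * q1 ^ 2 * q1 ^ (-(4:ℝ)/3) * q2 ^ (-(4:ℝ)/3) + (4:ℝ) * a ^ 2 * b * q1 ^ (-(4:ℝ)/3))) := by
      funext x; simp only [Z6]; ring
    rw [e]
    exact hquart _ _ _ _ _ p2
  have e2 : q1 ^ (-(2:ℝ)/3) = (s ^ 2)⁻¹ := by
    rw [← hs3, show -(2:ℝ)/3 = -((2:ℕ):ℝ)/3 by norm_num]; exact rpow_third s hs 2
  have e4 : q1 ^ (-(4:ℝ)/3) = (s ^ 4)⁻¹ := by
    rw [← hs3, show -(4:ℝ)/3 = -((4:ℕ):ℝ)/3 by norm_num]; exact rpow_third s hs 4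
  have e5 : q1 ^ (-(2:ℝ)/3 - 1) = (s ^ 5)⁻¹ := by
    rw [← hs3, show -(2:ℝ)/3 - 1 = -((5:ℕ):ℝ)/3 by norm_num]; exact rpow_third s hs 5
  have e7 : q1 ^ (-(4:ℝ)/3 - 1) = (s ^ 7)⁻¹ := by
    rw [← hs3, show -(4:ℝ)/3 - 1 = -((7:ℕ):ℝ)/3 by norm_num]; exact rpow_third s hs 7
  have f2 : q2 ^ (-(2:ℝ)/3) = (t ^ 2)⁻¹ := by
    rw [← ht3, show -(2:ℝ)/3 = -((2:ℕ):ℝ)/3 by norm_num]; exact rpow_third t htp 2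
  have f4 : q2 ^ (-(4:ℝ)/3) = (t ^ 4)⁻¹ := by
    rw [← ht3, show -(4:ℝ)/3 = -((4:ℕ):ℝ)/3 by norm_num]; exact rpow_third t htp 4
  have f5 : q2 ^ (-(2:ℝ)/3 - 1) = (t ^ 5)⁻¹ := by
    rw [← ht3, show -(2:ℝ)/3 - 1 = -((5:ℕ):ℝ)/3 by norm_num]; exact rpow_third t htp 5
  have f7 : q2 ^ (-(4:ℝ)/3 - 1) = (t ^ 7)⁻¹ := by
    rw [← ht3, show -(4:ℝ)/3 - 1 = -((7:ℕ):ℝ)/3 by norm_num]; exact rpow_third t htp 7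
  simp only [pb]
  rw [hHq1.deriv, hHq2.deriv, hHp1.deriv, hHp2.deriv,
      hZq1.deriv, hZq2.deriv, hZp1.deriv, hZp2.deriv]
  rw [e2, e4, e5, e7, f2, f4, f5, f7, ← hs3, ← ht3]
  have hs0 := hs.ne'
  have ht0 := htp.ne'
  field_simp
  ring
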